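/- arXiv:2009.06409 — 2 statements merged into one kernel-verified Lean document; each statement's English description precedes it below -/
import Mathlib

section
/- In the SIR model, if R₀ ≥ N/S(0) then the bound (N/R₀)·(ln(N/(R₀·S(0))) − 1) − R(0) + N is attained: there exists t* ≥ 0 with I(t*) = (N/R₀)·(ln(N/(R₀·S(0))) − 1) − R(0) + N, and I(t) ≤ I(t*) for all t ≥ 0. -/
/-!
The quantity `I + S - (γ/β) log S`, with `β = γR₀/N`, is conserved along solutions, so
`I = const - (S - (γ/β) log S)`. The map `x ↦ x - (γ/β) log x` is minimal at `x = γ/β = N/R₀`,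
hence `I` is maximal exactly when `S` crosses the threshold `N/R₀`. It does cross it: `S` starts
above it, and as long as it stays above, `I` grows, so `S` decreases at a rate bounded away from
zero and would become negative.
-/

open Set Real

section Calculus

variable {f f' : ℝ → ℝ} {a : ℝ}

theorem monotoneOn_Ici_of_hasDerivAt_nonneg (hf : ∀ t ≥ a, HasDerivAt f (f' t) t)
    (hf' : ∀ t > a, 0 ≤ f' t) : MonotoneOn f (Ici a) :=
  monotoneOn_of_hasDerivWithinAt_nonneg (convex_Ici a)
    (fun t ht => (hf t ht).continuousAt.continuousWithinAt)
    (fun t ht => by rw [interior_Ici] at ht ⊢; exact (hf t ht.le).hasDerivWithinAt)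
    (fun t ht => hf' t (by rwa [interior_Ici] at ht))

theorem antitoneOn_Ici_of_hasDerivAt_nonpos (hf : ∀ t ≥ a, HasDerivAt f (f' t) t)
    (hf' : ∀ t > a, f' t ≤ 0) : AntitoneOn f (Ici a) :=
  antitoneOn_of_hasDerivWithinAt_nonpos (convex_Ici a)
    (fun t ht => (hf t ht).continuousAt.continuousWithinAt)
    (fun t ht => by rw [interior_Ici] at ht ⊢; exact (hf t ht.le).hasDerivWithinAt)
    (fun t ht => hf' t (by rwa [interior_Ici] at ht))

theorem eq_of_hasDerivAt_zero_of_ge (hf : ∀ t ≥ a, HasDerivAt f 0 t) :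
    ∀ t ≥ a, f t = f a := fun t ht =>
  constant_of_has_deriv_right_zero (fun x hx => (hf x hx.1).continuousAt.continuousWithinAt)
    (fun x hx => (hf x hx.1).hasDerivWithinAt) t ⟨ht, le_rfl⟩

theorem mul_exp_le_of_neg_mul_le_deriv {c : ℝ} (hf : ∀ t ≥ a, HasDerivAt f (f' t) t)
    (hf' : ∀ t > a, -c * f t ≤ f' t) : ∀ t ≥ a, f a * exp (-c * (t - a)) ≤ f t := by
  have hmono : MonotoneOn (fun t => f t * exp (c * (t - a))) (Ici a) := by
    refine monotoneOn_Ici_of_hasDerivAt_nonneg (fun t ht => (hf t ht).mul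
      ((((hasDerivAt_id t).sub_const a).const_mul c).exp)) fun t ht => ?_
    simp only [id, mul_one]
    nlinarith [exp_pos (c * (t - a)), hf' t ht]
  intro t ht
  have h := hmono self_mem_Ici ht ht
  simp only [sub_self, mul_zero, exp_zero, mul_one] at h
  calc f a * exp (-c * (t - a)) ≤ f t * exp (c * (t - a)) * exp (-c * (t - a)) := by
        gcongr
    _ = f t := by rw [mul_assoc, ← exp_add, neg_mul, add_neg_cancel, exp_zero, mul_one]

theorem exists_lt_zero_of_hasDerivAt_le_neg {c : ℝ} (hc : 0 < c)
    (hf : ∀ t ≥ a, HasDerivAt f (f' t) t) (hf' : ∀ t > a, f' t ≤ -c) : ∃ t ≥ a, f t < 0 := by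
  by_contra! hnonneg
  have hanti : AntitoneOn (fun t => f t + c * t) (Ici a) :=
    antitoneOn_Ici_of_hasDerivAt_nonpos (fun t ht => (hf t ht).add ((hasDerivAt_id t).const_mul c))
      fun t ht => by simp only [mul_one]; linarith [hf' t ht]
  set T := a + (f a + 1) / c
  have hT : a ≤ T := le_add_of_nonneg_right (by have := hnonneg a le_rfl; positivity)
  have h := hanti self_mem_Ici hT hT
  have hcT : c * T = c * a + (f a + 1) := by simp only [T]; field_simp
  simp only at h
  linarith [hnonneg T hT]

end Calculus

theorem mul_log_sub_le_mul_log_self_sub {a x : ℝ} (ha : 0 < a) (hx : 0 < x) :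
    a * log x - x ≤ a * log a - a := by
  have h := log_le_sub_one_of_pos (div_pos hx ha)
  rw [log_div hx.ne' ha.ne'] at h
  have hscale : a * (x / a - 1) = x - a := by field_simp
  linarith [mul_le_mul_of_nonneg_left h ha.le]

section SIR

variable {β γ : ℝ} {S I : ℝ → ℝ}

theorem sir_conserved (hβ : β ≠ 0)
    (hS' : ∀ t ≥ (0:ℝ), HasDerivAt S (-β * S t * I t) t)
    (hI' : ∀ t ≥ (0:ℝ), HasDerivAt I (β * S t * I t - γ * I t) t)
    (hS : ∀ t ≥ (0:ℝ), 0 < S t) :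
    ∀ t ≥ (0:ℝ), I t + S t - γ / β * log (S t) = I 0 + S 0 - γ / β * log (S 0) :=
  eq_of_hasDerivAt_zero_of_ge (f := fun t => I t + S t - γ / β * log (S t)) fun t ht => by
    refine (((hI' t ht).add (hS' t ht)).sub
      (((hS' t ht).log (hS t ht).ne').const_mul (γ / β))).congr_deriv ?_
    have hSt := (hS t ht).ne'
    field_simp
    ring

theorem sir_infected_le_of_susceptible_eq (hβ : 0 < β) (hγ : 0 < γ)
    (hS' : ∀ t ≥ (0:ℝ), HasDerivAt S (-β * S t * I t) t)
    (hI' : ∀ t ≥ (0:ℝ), HasDerivAt I (β * S t * I t - γ * I t) t)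
    (hS : ∀ t ≥ (0:ℝ), 0 < S t) {s : ℝ} (hs : 0 ≤ s) (hSs : S s = γ / β) :
    ∀ t ≥ (0:ℝ), I t ≤ I s := fun t ht => by
  have hconst := sir_conserved hβ.ne' hS' hI' hS
  have hmin := mul_log_sub_le_mul_log_self_sub (div_pos hγ hβ) (hS t ht)
  have hconst_s := hconst s hs
  rw [hSs] at hconst_s
  linarith [hconst t ht]

theorem sir_exists_susceptible_le (hβ : 0 < β) (hγ : 0 < γ)
    (hS' : ∀ t ≥ (0:ℝ), HasDerivAt S (-β * S t * I t) t)
    (hI' : ∀ t ≥ (0:ℝ), HasDerivAt I (β * S t * I t - γ * I t) t)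
    (hSnn : ∀ t ≥ (0:ℝ), 0 ≤ S t) (hInn : ∀ t ≥ (0:ℝ), 0 ≤ I t) (hI0 : 0 < I 0) :
    ∃ T ≥ (0:ℝ), S T ≤ γ / β := by
  by_contra! habove
  have hthreshold : ∀ t ≥ (0:ℝ), γ < β * S t := fun t ht =>
    (div_lt_iff₀' hβ).mp (habove t ht)
  have hImono : MonotoneOn I (Ici 0) :=
    monotoneOn_Ici_of_hasDerivAt_nonneg hI' fun t ht => by
      nlinarith [hthreshold t ht.le, hInn t ht.le]
  obtain ⟨t, ht, hneg⟩ := exists_lt_zero_of_hasDerivAt_le_neg (mul_pos hγ hI0) hS' fun t ht => by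
    have hIt : I 0 ≤ I t := hImono self_mem_Ici ht.le ht.le
    nlinarith [hthreshold t ht.le]
  linarith [hSnn t ht]

end SIR

theorem sir_Imax_attained_general
    (N γ R₀ : ℝ) (S I R : ℝ → ℝ)
    (hN : 0 < N) (hγ : 0 < γ) (hR₀ : 0 < R₀)
    (hS' : ∀ t ≥ (0:ℝ), HasDerivAt S (-(γ * R₀ / N) * S t * I t) t)
    (hI' : ∀ t ≥ (0:ℝ), HasDerivAt I ((γ * R₀ / N) * S t * I t - γ * I t) t)
    (hSnn : ∀ t ≥ (0:ℝ), 0 ≤ S t) (hInn : ∀ t ≥ (0:ℝ), 0 ≤ I t)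
    (hRnn : ∀ t ≥ (0:ℝ), 0 ≤ R t)
    (hsum : ∀ t ≥ (0:ℝ), S t + I t + R t = N)
    (hS0 : 0 < S 0) (hI0 : 0 < I 0)
    (hcond : R₀ ≥ N / S 0) :
    ∃ tstar ≥ (0:ℝ),
      I tstar = (N / R₀) * (Real.log (N / (R₀ * S 0)) - 1) - R 0 + N ∧
      ∀ t ≥ (0:ℝ), I t ≤ I tstar := by
  set β := γ * R₀ / N
  have hβ : 0 < β := by positivity
  have hthreshold : γ / β = N / R₀ := by simp only [β]; field_simp
  -- `I ≤ N` gives `S' ≥ -βN S`, so `S` stays positive and `log S` is meaningful.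
  have hS : ∀ t ≥ (0:ℝ), 0 < S t := fun t ht =>
    (mul_pos hS0 (exp_pos _)).trans_le <| mul_exp_le_of_neg_mul_le_deriv (c := β * N) hS'
      (fun t ht => by
        have hIN : I t ≤ N := by linarith [hSnn t ht.le, hsum t ht.le, hRnn t ht.le]
        nlinarith [mul_nonneg (mul_nonneg hβ.le (hSnn t ht.le)) (sub_nonneg.2 hIN)]) t ht
  obtain ⟨T, hT, hST⟩ := sir_exists_susceptible_le hβ hγ hS' hI' hSnn hInn hI0
  have hS0T : γ / β ≤ S 0 := by
    rw [hthreshold, div_le_iff₀ hR₀]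
    rwa [ge_iff_le, div_le_iff₀ hS0, mul_comm] at hcond
  obtain ⟨tstar, ⟨htstar, -⟩, hStstar⟩ := intermediate_value_Icc' hT
    (fun t ht => (hS' t ht.1).continuousAt.continuousWithinAt) ⟨hST, hS0T⟩
  refine ⟨tstar, htstar, ?_, sir_infected_le_of_susceptible_eq hβ hγ hS' hI' hS htstar hStstar⟩
  have hconst := sir_conserved hβ.ne' hS' hI' hS tstar htstar
  rw [hStstar, hthreshold] at hconst
  rw [div_mul_eq_div_div, log_div (by positivity) hS0.ne']
  linarith [hsum 0 le_rfl]

/-- In the SIR model, if R₀ ≥ N/S(0) then the bound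
(N/R₀)·(ln(N/(R₀·S(0))) − 1) − R(0) + N is attained: there exists t* ≥ 0 with
I(t*) equal to the bound, and I(t) ≤ I(t*) for all t ≥ 0. -/
theorem sir_Imax_attained
    (N γ R₀ : ℝ) (S I R : ℝ → ℝ)
    (hN : 0 < N) (hγ : 0 < γ) (hR₀ : 0 < R₀)
    (hS' : ∀ t ≥ (0:ℝ), HasDerivAt S (-(γ * R₀ / N) * S t * I t) t)
    (hI' : ∀ t ≥ (0:ℝ), HasDerivAt I ((γ * R₀ / N) * S t * I t - γ * I t) t)
    (hR' : ∀ t ≥ (0:ℝ), HasDerivAt R (γ * I t) t)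
    (hSnn : ∀ t ≥ (0:ℝ), 0 ≤ S t) (hInn : ∀ t ≥ (0:ℝ), 0 ≤ I t)
    (hRnn : ∀ t ≥ (0:ℝ), 0 ≤ R t)
    (hsum : ∀ t ≥ (0:ℝ), S t + I t + R t = N)
    (hS0 : 0 < S 0) (hI0 : 0 < I 0)
    (hcond : R₀ ≥ N / S 0) :
    ∃ tstar ≥ (0:ℝ),
      I tstar = (N / R₀) * (Real.log (N / (R₀ * S 0)) - 1) - R 0 + N ∧
      ∀ t ≥ (0:ℝ), I t ≤ I tstar :=
  sir_Imax_attained_general N γ R₀ S I R hN hγ hR₀ hS' hI' hSnn hInn hRnn hsum hS0 hI0 hcond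
end

section
/- Let S₀ > 0, I₀ > 0, R₀c ≥ 0, set N = S₀ + I₀ + R₀c, and let M satisfy I₀ < M < S₀ + I₀. If r* > N/S₀ satisfies (N/r*)·(ln(N/(r*·S₀)) − 1) − R₀c + N = M, then v := N/(r*·S₀) is the unique solution in the interval (0,1) of the equation v·ln(v) = v + (M + R₀c − N)/S₀. -/
/-! On `(0, 1)` the map `x ↦ x log x - x` has derivative `log x < 0`, so it is strictly
decreasing and takes each value at most once. Substituting `N / r* = v S₀` into the defining
equation of `r*` shows that `v` is such a solution, and `r* > N / S₀` puts `v` in `(0, 1)`. -/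

open Real Set

theorem strictAntiOn_mul_log_sub_self : StrictAntiOn (fun x : ℝ ↦ x * log x - x) (Icc 0 1) := by
  refine strictAntiOn_of_deriv_neg (convex_Icc 0 1)
    (continuous_mul_log.sub continuous_id).continuousOn fun x hx ↦ ?_
  rw [interior_Icc] at hx
  have hderiv : HasDerivAt (fun x ↦ x * log x - x) (log x + 1 - 1) x :=
    (hasDerivAt_mul_log hx.1.ne').sub (hasDerivAt_id' x)
  rw [hderiv.deriv, add_sub_cancel_right]
  exact log_neg hx.1 hx.2

theorem eq_of_mul_log_eq_self_add {c v w : ℝ} (hv : v ∈ Icc (0 : ℝ) 1) (hw : w ∈ Icc (0 : ℝ) 1)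
    (hveq : v * log v = v + c) (hweq : w * log w = w + c) : w = v :=
  strictAntiOn_mul_log_sub_self.injOn hw hv <| by
    simp only [hveq, hweq, add_sub_cancel_left]

theorem mul_log_div_eq_of_div_mul_log_sub_one_eq {S R N M r : ℝ} (hS : S ≠ 0) (hr : r ≠ 0)
    (h : N / r * (log (N / (r * S)) - 1) - R + N = M) :
    N / (r * S) * log (N / (r * S)) = N / (r * S) + (M + R - N) / S := by
  subst h
  field_simp
  ring

theorem critical_v_unique_in_unit_interval_general
    (S₀ I₀ R₀c N M rstar : ℝ)
    (hS₀ : 0 < S₀) (hI₀ : 0 < I₀) (hR₀c : 0 ≤ R₀c)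
    (hNdef : N = S₀ + I₀ + R₀c)
    (hrstar : N / S₀ < rstar)
    (hrstarEq : (N / rstar) * (Real.log (N / (rstar * S₀)) - 1) - R₀c + N = M) :
    (0 < N / (rstar * S₀) ∧ N / (rstar * S₀) < 1) ∧
    (N / (rstar * S₀)) * Real.log (N / (rstar * S₀))
      = N / (rstar * S₀) + (M + R₀c - N) / S₀ ∧
    ∀ w : ℝ, 0 < w → w < 1 →
      w * Real.log w = w + (M + R₀c - N) / S₀ → w = N / (rstar * S₀) := by
  have hN : 0 < N := by linarith
  have hNlt : N < rstar * S₀ := (div_lt_iff₀ hS₀).mp hrstar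
  have hrstar₀ : 0 < rstar := pos_of_mul_pos_left (hN.trans hNlt) hS₀.le
  have hv : 0 < N / (rstar * S₀) ∧ N / (rstar * S₀) < 1 :=
    ⟨div_pos hN (hN.trans hNlt), (div_lt_one (hN.trans hNlt)).mpr hNlt⟩
  have hveq := mul_log_div_eq_of_div_mul_log_sub_one_eq hS₀.ne' hrstar₀.ne' hrstarEq
  refine ⟨hv, hveq, fun w hw₀ hw₁ hweq ↦ ?_⟩
  exact eq_of_mul_log_eq_self_add ⟨hv.1.le, hv.2.le⟩ ⟨hw₀.le, hw₁.le⟩ hveq hweq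

/-- With S₀, I₀ > 0, R₀c ≥ 0, N = S₀ + I₀ + R₀c and I₀ < M < S₀ + I₀,
if r* > N/S₀ satisfies (N/r*)·(ln(N/(r*·S₀)) − 1) − R₀c + N = M, then v = N/(r*·S₀)
is the unique solution in (0,1) of v·ln(v) = v + (M + R₀c − N)/S₀. -/
theorem critical_v_unique_in_unit_interval
    (S₀ I₀ R₀c N M rstar : ℝ)
    (hS₀ : 0 < S₀) (hI₀ : 0 < I₀) (hR₀c : 0 ≤ R₀c)
    (hNdef : N = S₀ + I₀ + R₀c)
    (hM₁ : I₀ < M) (hM₂ : M < S₀ + I₀)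
    (hrstar : N / S₀ < rstar)
    (hrstarEq : (N / rstar) * (Real.log (N / (rstar * S₀)) - 1) - R₀c + N = M) :
    (0 < N / (rstar * S₀) ∧ N / (rstar * S₀) < 1) ∧
    (N / (rstar * S₀)) * Real.log (N / (rstar * S₀))
      = N / (rstar * S₀) + (M + R₀c - N) / S₀ ∧
    ∀ w : ℝ, 0 < w → w < 1 →
      w * Real.log w = w + (M + R₀c - N) / S₀ → w = N / (rstar * S₀) :=
  critical_v_unique_in_unit_interval_general S₀ I₀ R₀c N M rstar hS₀ hI₀ hR₀c hNdef hrstar hrstarEq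
end
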